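/- Step Stability: if e1 ⇢ₙ e2 by a top-level reduction rule, then either ⌊e1⌋_M ⇢ₙ ⌊e2⌋_M, or the rule applied is one of the lift rules (Lift-*) lifting a marker m with m ∉ M. -/
import Mathlib


/-- Markers for the augmented (dependency-tracking) semantics of SLamJS. -/
abbrev Marker := String

/-- Atomic constants of SLamJS. -/
inductive Const where
  | undef | null
  | bool (b : Bool)
  | str (s : String)
  | num (n : Int)

/-- SLamJS expressions, including explicit substitutions `clos`,
`runIn`, dependency markers `mark` and the hole `_`.
Environments are total functions `String → Expr`, with `hole`
playing the role of an unbound variable. -/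
inductive Expr where
  | const : Const → Expr
  | var : String → Expr
  | fn : String → Expr → Expr
  | app : Expr → Expr → Expr
  | box : Expr → Expr
  | unbox : Expr → Expr
  | run : Expr → Expr
  | ite : Expr → Expr → Expr → Expr
  | clos : Expr → (String → Expr) → Expr
  | runIn : Expr → (String → Expr) → Expr
  | mark : Marker → Expr → Expr
  | hole : Expr

namespace Expr

/-- Stage-`n` values. -/
inductive IsVal : Nat → Expr → Prop where
  | closV : ∀ x e ρ, IsVal 0 (clos (fn x e) ρ)
  | constV : ∀ n k, IsVal n (const k)
  | boxV : ∀ n v, IsVal (n+1) v → IsVal n (box v)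
  | varV : ∀ n x, IsVal (n+1) (var x)
  | fnV : ∀ n x e, IsVal (n+1) e → IsVal (n+1) (fn x e)
  | appV : ∀ n e1 e2, IsVal (n+1) e1 → IsVal (n+1) e2 → IsVal (n+1) (app e1 e2)
  | runV : ∀ n e, IsVal (n+1) e → IsVal (n+1) (run e)
  | iteV : ∀ n e1 e2 e3, IsVal (n+1) e1 → IsVal (n+1) e2 → IsVal (n+1) e3 →
      IsVal (n+1) (ite e1 e2 e3)
  | unboxV : ∀ n e, IsVal (n+1) e → IsVal (n+2) (unbox e)
  | markV : ∀ n m v, IsVal n v → IsVal n (mark m v)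
  | holeV : ∀ n, IsVal n hole

/-- Strip all markers from an expression (homomorphically). -/
def unmark : Expr → Expr
  | const k => const k
  | var x => var x
  | fn x e => fn x (unmark e)
  | app e1 e2 => app (unmark e1) (unmark e2)
  | box e => box (unmark e)
  | unbox e => unbox (unmark e)
  | run e => run (unmark e)
  | ite e1 e2 e3 => ite (unmark e1) (unmark e2) (unmark e3)
  | clos e ρ => clos (unmark e) (fun x => unmark (ρ x))
  | runIn e ρ => runIn (unmark e) (fun x => unmark (ρ x))
  | mark _ e => unmark e
  | hole => hole

open Classical in
/-- `M`-erasure: replace every subexpression `(m : e)` with `m ∉ M` by the hole. -/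
noncomputable def erase (M : Set Marker) : Expr → Expr
  | const k => const k
  | var x => var x
  | fn x e => fn x (erase M e)
  | app e1 e2 => app (erase M e1) (erase M e2)
  | box e => box (erase M e)
  | unbox e => unbox (erase M e)
  | run e => run (erase M e)
  | ite e1 e2 e3 => ite (erase M e1) (erase M e2) (erase M e3)
  | clos e ρ => clos (erase M e) (fun x => erase M (ρ x))
  | runIn e ρ => runIn (erase M e) (fun x => erase M (ρ x))
  | mark m e => if m ∈ M then mark m (erase M e) else hole
  | hole => hole

/-- An expression is hole-free if it contains no occurrence of `_`. -/
def HoleFree : Expr → Prop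
  | const _ => True
  | var _ => True
  | fn _ e => HoleFree e
  | app e1 e2 => HoleFree e1 ∧ HoleFree e2
  | box e => HoleFree e
  | unbox e => HoleFree e
  | run e => HoleFree e
  | ite e1 e2 e3 => HoleFree e1 ∧ HoleFree e2 ∧ HoleFree e3
  | clos e ρ => HoleFree e ∧ ∀ x, HoleFree (ρ x)
  | runIn e ρ => HoleFree e ∧ ∀ x, HoleFree (ρ x)
  | mark _ e => HoleFree e
  | hole => False

/-- The set of markers occurring in an expression. -/
def markersOf : Expr → Set Marker
  | const _ => ∅
  | var _ => ∅
  | fn _ e => markersOf e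
  | app e1 e2 => markersOf e1 ∪ markersOf e2
  | box e => markersOf e
  | unbox e => markersOf e
  | run e => markersOf e
  | ite e1 e2 e3 => markersOf e1 ∪ markersOf e2 ∪ markersOf e3
  | clos e ρ => markersOf e ∪ ⋃ x, markersOf (ρ x)
  | runIn e ρ => markersOf e ∪ ⋃ x, markersOf (ρ x)
  | mark m e => insert m (markersOf e)
  | hole => ∅

/-- Prefix ordering: `Pre e1 e2` iff `e1` is obtained from `e2` by
replacing some subexpressions by the hole. -/
inductive Pre : Expr → Expr → Prop where
  | hole : ∀ e, Pre hole e
  | const : ∀ k, Pre (const k) (const k)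
  | var : ∀ x, Pre (var x) (var x)
  | fn : ∀ x e e', Pre e e' → Pre (fn x e) (fn x e')
  | app : ∀ e1 e1' e2 e2', Pre e1 e1' → Pre e2 e2' → Pre (app e1 e2) (app e1' e2')
  | box : ∀ e e', Pre e e' → Pre (box e) (box e')
  | unbox : ∀ e e', Pre e e' → Pre (unbox e) (unbox e')
  | run : ∀ e e', Pre e e' → Pre (run e) (run e')
  | ite : ∀ e1 e1' e2 e2' e3 e3', Pre e1 e1' → Pre e2 e2' → Pre e3 e3' →
      Pre (ite e1 e2 e3) (ite e1' e2' e3')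
  | clos : ∀ e e' ρ ρ', Pre e e' → (∀ x, Pre (ρ x) (ρ' x)) → Pre (clos e ρ) (clos e' ρ')
  | runIn : ∀ e e' ρ ρ', Pre e e' → (∀ x, Pre (ρ x) (ρ' x)) → Pre (runIn e ρ) (runIn e' ρ')
  | mark : ∀ m e e', Pre e e' → Pre (mark m e) (mark m e')

/-- The lift rules of the augmented semantics, recording which marker is lifted. -/
inductive LiftOf : Marker → Expr → Expr → Prop where
  | liftApp : ∀ m e ρ v, IsVal 0 v →
      LiftOf m (app (clos (mark m e) ρ) v) (mark m (app (clos e ρ) v))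
  | liftIf : ∀ m v e1 e2, IsVal 0 v →
      LiftOf m (ite (mark m v) e1 e2) (mark m (ite v e1 e2))
  | liftUnbox : ∀ m v, IsVal 1 v →
      LiftOf m (unbox (mark m v)) (mark m (unbox v))
  | liftRunIn : ∀ m v ρ, IsVal 0 v →
      LiftOf m (runIn (mark m v) ρ) (mark m (runIn v ρ))

/-- Top-level (level-indexed) reduction `e ⇢ₙ e'` of the augmented semantics. -/
inductive Red : Nat → Expr → Expr → Prop where
  -- environment propagation
  | constE : ∀ n k ρ, Red n (clos (const k) ρ) (const k)
  | varE : ∀ n x ρ, Red (n+1) (clos (var x) ρ) (var x)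
  | fnE : ∀ n x e ρ, Red (n+1) (clos (fn x e) ρ) (fn x (clos e ρ))
  | appE : ∀ n e1 e2 ρ, Red n (clos (app e1 e2) ρ) (app (clos e1 ρ) (clos e2 ρ))
  | boxE : ∀ n e ρ, Red n (clos (box e) ρ) (box (clos e ρ))
  | unboxE : ∀ n e ρ, Red n (clos (unbox e) ρ) (unbox (clos e ρ))
  | runE0 : ∀ e ρ, Red 0 (clos (run e) ρ) (runIn (clos e ρ) ρ)
  | runES : ∀ n e ρ, Red (n+1) (clos (run e) ρ) (run (clos e ρ))
  | iteE : ∀ n e1 e2 e3 ρ,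
      Red n (clos (ite e1 e2 e3) ρ) (ite (clos e1 ρ) (clos e2 ρ) (clos e3 ρ))
  | markE : ∀ n m e ρ, Red n (clos (mark m e) ρ) (mark m (clos e ρ))
  | holeE : ∀ n ρ, Red n (clos hole ρ) hole
  -- proper reduction
  | lookup : ∀ x ρ, Red 0 (clos (var x) ρ) (ρ x)
  | apply : ∀ x e ρ v, IsVal 0 v →
      Red 0 (app (clos (fn x e) ρ) v) (clos e (Function.update ρ x v))
  | unboxR : ∀ v, IsVal 1 v → Red 1 (unbox (box v)) v
  | runR : ∀ v ρ, IsVal 1 v → Red 0 (runIn (box v) ρ) (clos v ρ)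
  | ifTrue : ∀ e1 e2, Red 0 (ite (const (.bool true)) e1 e2) e1
  | ifFalse : ∀ e1 e2, Red 0 (ite (const (.bool false)) e1 e2) e2
  -- lifts
  | lift : ∀ n m e1 e2, LiftOf m e1 e2 → Red n e1 e2

/-- Contextual evaluation `e →ₘ e'`: reduction inside an evaluation context. -/
inductive Ev : Nat → Expr → Expr → Prop where
  | red : ∀ n e e', Red n e e' → Ev n e e'
  | appL : ∀ m e1 e1' e2, Ev m e1 e1' → Ev m (app e1 e2) (app e1' e2)
  | appR : ∀ m v e e', IsVal m v → Ev m e e' → Ev m (app v e) (app v e')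
  | fnB : ∀ m x e e', Ev (m+1) e e' → Ev (m+1) (fn x e) (fn x e')
  | boxC : ∀ m e e', Ev (m+1) e e' → Ev m (box e) (box e')
  | unboxC : ∀ m e e', Ev m e e' → Ev (m+1) (unbox e) (unbox e')
  | runC : ∀ m e e', Ev m e e' → Ev m (run e) (run e')
  | runInC : ∀ m e e' ρ, Ev m e e' → Ev m (runIn e ρ) (runIn e' ρ)
  | closC : ∀ m e e' ρ, Ev m e e' → Ev m (clos e ρ) (clos e' ρ)
  | iteG : ∀ m e1 e1' e2 e3, Ev m e1 e1' → Ev m (ite e1 e2 e3) (ite e1' e2 e3)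
  | iteT : ∀ m v e2 e2' e3, IsVal (m+1) v → Ev (m+1) e2 e2' →
      Ev (m+1) (ite v e2 e3) (ite v e2' e3)
  | iteE : ∀ m v1 v2 e3 e3', IsVal (m+1) v1 → IsVal (m+1) v2 → Ev (m+1) e3 e3' →
      Ev (m+1) (ite v1 v2 e3) (ite v1 v2 e3')
  | markC : ∀ m mk e e', Ev m e e' → Ev m (mark mk e) (mark mk e')

/-- One evaluation step at some arbitrary level. -/
def StepAny (e e' : Expr) : Prop := ∃ m, Ev m e e'

/-- `→*_⋄`: zero or more evaluation steps at arbitrary levels. -/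
def EvStar : Expr → Expr → Prop := Relation.ReflTransGen StepAny

end Expr



open Expr in
lemma erase_isVal (M : Set Marker) {n : Nat} {v : Expr} (h : IsVal n v) :
    IsVal n (Expr.erase M v) := by
  induction h with
  | closV x e ρ => exact IsVal.closV _ _ _
  | constV n k => exact IsVal.constV _ _
  | boxV n v _ ih => exact IsVal.boxV _ _ ih
  | varV n x => exact IsVal.varV _ _
  | fnV n x e _ ih => exact IsVal.fnV _ _ _ ih
  | appV n e1 e2 _ _ ih1 ih2 => exact IsVal.appV _ _ _ ih1 ih2
  | runV n e _ ih => exact IsVal.runV _ _ ih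
  | iteV n e1 e2 e3 _ _ _ ih1 ih2 ih3 => exact IsVal.iteV _ _ _ _ ih1 ih2 ih3
  | unboxV n e _ ih => exact IsVal.unboxV _ _ ih
  | markV n m v _ ih =>
      simp only [Expr.erase]
      split
      · exact IsVal.markV _ _ _ ih
      · exact IsVal.holeV _
  | holeV n => exact IsVal.holeV _

open Expr in
/-- Step Stability: a top-level reduction either commutes with `M`-erasure, or
is a lift of a marker outside `M`. -/
theorem step_stability (M : Set Marker) (n : Nat) (e1 e2 : Expr)
    (h : Red n e1 e2) :
    Red n (erase M e1) (erase M e2) ∨ ∃ m, m ∉ M ∧ LiftOf m e1 e2 := by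
  induction h with
  | constE n k ρ => exact Or.inl (Red.constE ..)
  | varE n x ρ => exact Or.inl (Red.varE ..)
  | fnE n x e ρ => exact Or.inl (Red.fnE ..)
  | appE n e1 e2 ρ => exact Or.inl (Red.appE ..)
  | boxE n e ρ => exact Or.inl (Red.boxE ..)
  | unboxE n e ρ => exact Or.inl (Red.unboxE ..)
  | runE0 e ρ => exact Or.inl (Red.runE0 ..)
  | runES n e ρ => exact Or.inl (Red.runES ..)
  | iteE n e1 e2 e3 ρ => exact Or.inl (Red.iteE ..)
  | markE n m e ρ =>
      left
      by_cases hm : m ∈ M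
      · simp only [erase, hm, if_true]
        exact Red.markE ..
      · simp only [erase, hm, if_false]
        exact Red.holeE ..
  | holeE n ρ => exact Or.inl (Red.holeE ..)
  | lookup x ρ => exact Or.inl (Red.lookup ..)
  | apply x e ρ v hv =>
      left
      have : (fun y => erase M (Function.update ρ x v y)) =
          Function.update (fun y => erase M (ρ y)) x (erase M v) := by
        funext y
        by_cases hy : y = x
        · subst hy; simp [Function.update]
        · simp [Function.update, hy]
      simp only [erase, this]
      exact Red.apply _ _ _ _ (erase_isVal M hv)
  | unboxR v hv => exact Or.inl (Red.unboxR _ (erase_isVal M hv))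
  | runR v ρ hv => exact Or.inl (Red.runR _ _ (erase_isVal M hv))
  | ifTrue e1 e2 => exact Or.inl (Red.ifTrue ..)
  | ifFalse e1 e2 => exact Or.inl (Red.ifFalse ..)
  | lift n m e1 e2 hl =>
      by_cases hm : m ∈ M
      · left
        cases hl with
        | liftApp e ρ v hv =>
            simp only [erase, hm, if_true]
            exact Red.lift _ _ _ _ (LiftOf.liftApp _ _ _ _ (erase_isVal M hv))
        | liftIf v e1 e2 hv =>
            simp only [erase, hm, if_true]
            exact Red.lift _ _ _ _ (LiftOf.liftIf _ _ _ _ (erase_isVal M hv))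
        | liftUnbox v hv =>
            simp only [erase, hm, if_true]
            exact Red.lift _ _ _ _ (LiftOf.liftUnbox _ _ (erase_isVal M hv))
        | liftRunIn v ρ hv =>
            simp only [erase, hm, if_true]
            exact Red.lift _ _ _ _ (LiftOf.liftRunIn _ _ _ (erase_isVal M hv))
      · exact Or.inr ⟨m, hm, hl⟩
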